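/- A conjunctive query Q admits a width-1 query plan if and only if Q is acyclic. -/

import Mathlib

/-!
In a plan of width one every node `p` has a guard: one of its relations containing every
attribute that `p` shares with the relations outside `p`. Such a plan yields a join tree bottom-up:
at a join of `l` and `r`, link the join trees of `l` and `r` by an edge between their guards. An
attribute shared by a relation of `l` and one of `r` lies in both interfaces, hence in both guards,
so the relations containing it stay connected.

Conversely, cut a join tree at an edge `r v` next to a root `r` that contains every attribute its
component shares with the rest of the query. Every path between the two sides uses the edge, so
by the connectedness condition `r` and `v` inherit this property for their sides. Recursively,
the plans of the two sides joined together form a plan in which each join is guarded by its root.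
-/

/-- A binary query plan: leaves are base relations, internal nodes are joins. -/
inductive Plan (ι : Type) : Type where
  | leaf : ι → Plan ι
  | node : Plan ι → Plan ι → Plan ι

namespace Plan

variable {ι : Type} [DecidableEq ι]

/-- The set of relations joined in (the subtree rooted at) a plan node. -/
def rels : Plan ι → Finset ι
  | .leaf i => {i}
  | .node l r => l.rels ∪ r.rels

/-- All nodes (subplans) of a plan. -/
def subplans : Plan ι → List (Plan ι)
  | .leaf i => [.leaf i]
  | .node l r => .node l r :: (l.subplans ++ r.subplans)

/-- The list of leaf relations of a plan. -/
def leaves : Plan ι → List ι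
  | .leaf i => [i]
  | .node l r => l.leaves ++ r.leaves

end Plan

variable {ι A : Type} [DecidableEq ι] [DecidableEq A]

/-- The attributes occurring in a set of relations, given a schema. -/
def attrs (sch : ι → Finset A) (S : Finset ι) : Finset A := S.biUnion sch

/-- The interface `I(p)` of a plan node `p`. -/
def interface (sch : ι → Finset A) (all : Finset ι) (p : Plan ι) : Finset A :=
  attrs sch p.rels ∩ attrs sch (all \ p.rels)

/-- The width of a plan node. -/
noncomputable def nodeWidth (sch : ι → Finset A) (all : Finset ι) (p : Plan ι) : ℕ :=
  sInf {k | ∃ S ⊆ p.rels, S.card = k ∧ interface sch all p ⊆ attrs sch S}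

/-- The width of a plan: the maximum width over all of its nodes. -/
noncomputable def planWidth (sch : ι → Finset A) (all : Finset ι) (P : Plan ι) : ℕ :=
  (P.subplans.map (nodeWidth sch all)).foldr max 0

/-- A join tree of the query: a tree on the relations satisfying the
connectedness condition for the attribute sets. -/
def JoinTree (G : SimpleGraph ι) (sch : ι → Finset A) : Prop :=
  G.IsTree ∧
    ∀ (p q : ι) (W : G.Walk p q), W.IsPath → ∀ s ∈ W.support, sch p ∩ sch q ⊆ sch s

namespace SimpleGraph

variable {V : Type*} {G H : SimpleGraph V} {u v x : V}

lemma Walk.edges_subset_left_of_disjoint_support (hd : Disjoint G.support H.support) :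
    ∀ {u v : V} (W : (G ⊔ H).Walk u v), u ∉ H.support → ∀ e ∈ W.edges, e ∈ G.edgeSet
  | _, _, .nil, _ => by simp
  | _, _, .cons h W, hu => by
    have hG : G.Adj _ _ := h.resolve_right fun hH => hu ⟨_, hH⟩
    intro e he
    rcases List.mem_cons.1 (by simpa using he) with rfl | he
    · exact hG
    · exact edges_subset_left_of_disjoint_support hd W
        (Set.disjoint_left.1 hd ⟨_, hG.symm⟩) e he

lemma Reachable.of_sup_of_disjoint_support (hd : Disjoint G.support H.support)
    (h : (G ⊔ H).Reachable u v) (hu : u ∉ H.support) : G.Reachable u v :=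
  h.elim fun W => ⟨W.transfer G (W.edges_subset_left_of_disjoint_support hd hu)⟩

lemma IsAcyclic.sup_of_disjoint_support (hG : G.IsAcyclic) (hH : H.IsAcyclic)
    (hd : Disjoint G.support H.support) : (G ⊔ H).IsAcyclic := by
  intro v c hc
  wlog hv : v ∉ H.support generalizing G H
  · exact this hH hG hd.symm (c.mapLe (sup_comm G H).le) (hc.mapLe _)
      (Set.disjoint_right.1 hd (not_not.1 hv))
  exact hG _ (hc.transfer (c.edges_subset_left_of_disjoint_support hd hv))

lemma reachable_iff_eq_of_forall_not_adj (h : ∀ w, ¬G.Adj u w) : G.Reachable u x ↔ x = u := by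
  refine ⟨fun ⟨W⟩ => ?_, by rintro rfl; rfl⟩
  cases W with
  | nil => rfl
  | cons hadj _ => exact absurd hadj (h _)

lemma IsBridge.reachable_deleteEdges_or (hb : G.IsBridge s(u, v)) (h : G.Reachable u x) :
    (G.deleteEdges {s(u, v)}).Reachable u x ∨ (G.deleteEdges {s(u, v)}).Reachable v x := by
  classical
  by_contra! hx
  obtain ⟨W⟩ := h
  exact W.bypass_isPath.isTrail.not_mem_edges_of_not_reachable hb (fun h => hx.2 h.symm)
    (W.bypass.mem_edges_of_not_reachable_deleteEdges hx.1)

end SimpleGraph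

open SimpleGraph

namespace Plan

lemma mem_leaves {p : Plan ι} {x : ι} : x ∈ p.leaves ↔ x ∈ p.rels := by
  induction p with
  | leaf i => simp [leaves, rels]
  | node l r hl hr => simp [leaves, rels, hl, hr]

lemma nodup_leaves_node {l r : Plan ι} :
    (node l r).leaves.Nodup ↔ l.leaves.Nodup ∧ r.leaves.Nodup ∧ Disjoint l.rels r.rels := by
  simp only [leaves, List.nodup_append, Finset.disjoint_left, mem_leaves]
  grind

lemma self_mem_subplans {κ : Type} (p : Plan κ) : p ∈ p.subplans := by
  cases p <;> simp [subplans]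

lemma rels_nonempty (p : Plan ι) : p.rels.Nonempty := by
  induction p with
  | leaf i => simp [rels]
  | node l r hl _ => exact hl.mono Finset.subset_union_left

end Plan
lemma mem_interface {sch : ι → Finset A} {all : Finset ι} {p : Plan ι} {a : A} :
    a ∈ interface sch all p ↔ (∃ x ∈ p.rels, a ∈ sch x) ∧ ∃ y ∈ all \ p.rels, a ∈ sch y := by
  simp [interface, attrs]

lemma nodeWidth_le_one_iff {sch : ι → Finset A} {all : Finset ι} {p : Plan ι} :
    nodeWidth sch all p ≤ 1 ↔ ∃ g ∈ p.rels, interface sch all p ⊆ sch g := by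
  constructor
  · intro h
    obtain ⟨S, hSp, hS, hcov⟩ := Nat.sInf_mem (s := {k | ∃ S ⊆ p.rels, S.card = k ∧
      interface sch all p ⊆ attrs sch S}) ⟨_, p.rels, subset_rfl, rfl, Finset.inter_subset_left⟩
    have hS1 : S.card ≤ 1 := hS.le.trans h
    rcases S.eq_empty_or_nonempty with rfl | ⟨g, hg⟩
    · obtain ⟨g, hg⟩ := p.rels_nonempty
      exact ⟨g, hg, hcov.trans (by simp [attrs])⟩
    · refine ⟨g, hSp hg, hcov.trans fun a ha => ?_⟩
      obtain ⟨y, hy, hay⟩ := Finset.mem_biUnion.1 ha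
      rwa [Finset.card_le_one.1 hS1 y hy g hg] at hay
  · rintro ⟨g, hg, hcov⟩
    exact Nat.sInf_le ⟨{g}, by simpa using hg, Finset.card_singleton g, by simpa [attrs] using hcov⟩

lemma planWidth_le_iff {sch : ι → Finset A} {all : Finset ι} {P : Plan ι} {k : ℕ} :
    planWidth sch all P ≤ k ↔ ∀ q ∈ P.subplans, nodeWidth sch all q ≤ k := by
  unfold planWidth
  induction P.subplans with
  | nil => simp
  | cons q L ih => simp [ih]

/-- A join tree of the subquery formed by the relations in `s`, as a graph on all relations
whose edges stay inside `s`. -/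
structure IsJoinTreeOn {V α : Type*} (G : SimpleGraph V) (sch : V → Finset α) (s : Set V) :
    Prop where
  support_subset : G.support ⊆ s
  reachable : ∀ x ∈ s, ∀ y ∈ s, G.Reachable x y
  isAcyclic : G.IsAcyclic
  reachable_induce : ∀ (a : α) (x y : V) (hx : a ∈ sch x) (hy : a ∈ sch y), x ∈ s → y ∈ s →
    (G.induce {z | a ∈ sch z}).Reachable ⟨x, hx⟩ ⟨y, hy⟩

namespace IsJoinTreeOn

variable {V α : Type*} {sch : V → Finset α}

lemma singleton (sch : V → Finset α) (i : V) : IsJoinTreeOn ⊥ sch {i} where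
  support_subset := by simp
  reachable := by simp
  isAcyclic := isAcyclic_bot
  reachable_induce := by
    rintro a x y hx hy rfl rfl
    rfl

lemma sup_edge {Gl Gr : SimpleGraph V} {L R : Set V} {gl gr : V}
    (hl : IsJoinTreeOn Gl sch L) (hr : IsJoinTreeOn Gr sch R) (hLR : Disjoint L R)
    (hgl : gl ∈ L) (hgr : gr ∈ R)
    (hcross : ∀ a x y, x ∈ L → y ∈ R → a ∈ sch x → a ∈ sch y → a ∈ sch gl ∧ a ∈ sch gr) :
    IsJoinTreeOn (Gl ⊔ Gr ⊔ edge gl gr) sch (L ∪ R) := by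
  set G := Gl ⊔ Gr ⊔ edge gl gr
  have hne : gl ≠ gr := fun h => Set.disjoint_left.1 hLR hgl (h ▸ hgr)
  have hlG : Gl ≤ G := le_sup_left.trans le_sup_left
  have hrG : Gr ≤ G := le_sup_right.trans le_sup_left
  have hadj : G.Adj gl gr := Or.inr (by simp [edge_adj, hne])
  have hsupp : Disjoint Gl.support Gr.support := hLR.mono hl.support_subset hr.support_subset
  refine ⟨?_, ?_, ?_, ?_⟩
  · rintro x ⟨y, (h | h) | h⟩
    · exact Or.inl (hl.support_subset ⟨y, h⟩)
    · exact Or.inr (hr.support_subset ⟨y, h⟩)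
    · obtain ⟨⟨rfl, rfl⟩ | ⟨rfl, rfl⟩, -⟩ := (edge_adj ..).1 h
      exacts [Or.inl hgl, Or.inr hgr]
  · have hreach_gl : ∀ x ∈ L ∪ R, G.Reachable x gl := by
      rintro x (hx | hx)
      · exact (hl.reachable x hx gl hgl).mono hlG
      · exact ((hr.reachable x hx gr hgr).mono hrG).trans hadj.symm.reachable
    exact fun x hx y hy => (hreach_gl x hx).trans (hreach_gl y hy).symm
  · refine (hl.isAcyclic.sup_of_disjoint_support hr.isAcyclic hsupp).sup_edge_of_not_reachable
      fun h => ?_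
    have := mem_support_of_reachable hne.symm
      (h.of_sup_of_disjoint_support hsupp fun h' => Set.disjoint_left.1 hLR hgl
        (hr.support_subset h')).symm
    exact Set.disjoint_left.1 hLR (hl.support_subset this) hgr
  · intro a x y hx hy hxs hys
    have lift {K : SimpleGraph V} (hK : K ≤ G) {x y : V} {hx : a ∈ sch x} {hy : a ∈ sch y}
        (h : (K.induce {z | a ∈ sch z}).Reachable ⟨x, hx⟩ ⟨y, hy⟩) :
        (G.induce {z | a ∈ sch z}).Reachable ⟨x, hx⟩ ⟨y, hy⟩ :=
      h.mono (comap_monotone _ hK)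
    have cross : ∀ x y (hx : a ∈ sch x) (hy : a ∈ sch y), x ∈ L → y ∈ R →
        (G.induce {z | a ∈ sch z}).Reachable ⟨x, hx⟩ ⟨y, hy⟩ := by
      intro x y hx hy hxL hyR
      obtain ⟨hagl, hagr⟩ := hcross a x y hxL hyR hx hy
      have hadj' : (G.induce {z | a ∈ sch z}).Adj ⟨gl, hagl⟩ ⟨gr, hagr⟩ := hadj
      exact ((lift hlG (hl.reachable_induce a x gl hx hagl hxL hgl)).trans hadj'.reachable).trans
        (lift hrG (hr.reachable_induce a gr y hagr hy hgr hyR))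
    rcases hxs with hxL | hxR <;> rcases hys with hyL | hyR
    exacts [lift hlG (hl.reachable_induce a x y hx hy hxL hyL), cross x y hx hy hxL hyR,
      (cross y x hy hx hyL hxR).symm, lift hrG (hr.reachable_induce a x y hx hy hxR hyR)]

end IsJoinTreeOn

lemma IsJoinTreeOn.joinTree [Nonempty ι] {G : SimpleGraph ι} {sch : ι → Finset A}
    (h : IsJoinTreeOn G sch Set.univ) : JoinTree G sch := by
  have hconn : G.Connected :=
    (connected_iff G).2 ⟨fun x y => h.reachable x trivial y trivial, inferInstance⟩
  refine ⟨⟨hconn, h.isAcyclic⟩, fun p q W hW z hz a ha => ?_⟩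
  obtain ⟨hp, hq⟩ := Finset.mem_inter.1 ha
  obtain ⟨W'⟩ := h.reachable_induce a p q hp hq trivial trivial
  let W'' : G.Walk p q := W'.map (Embedding.induce _).toHom
  have hW : W = W''.bypass :=
    congrArg Subtype.val ((h.isAcyclic.subsingleton_path p q).elim ⟨W, hW⟩ ⟨_, W''.bypass_isPath⟩)
  obtain ⟨⟨z, haz⟩, -, rfl⟩ := List.mem_map.1 <|
    (Walk.support_map _ W').subst (motive := (z ∈ ·)) (W''.support_bypass_subset_support (hW ▸ hz))
  exact haz

lemma JoinTree.mem_of_reachable_deleteEdges {sch : ι → Finset A} {T G : SimpleGraph ι}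
    (hT : JoinTree T sch) (hGT : G ≤ T) {r v x y : ι} {a : A} (hrv : G.Adj r v)
    (hx : (G.deleteEdges {s(r, v)}).Reachable r x) (hy : (G.deleteEdges {s(r, v)}).Reachable v y)
    (hax : a ∈ sch x) (hay : a ∈ sch y) : a ∈ sch r ∧ a ∈ sch v := by
  have hb : G.IsBridge s(r, v) :=
    isAcyclic_iff_forall_adj_isBridge.1 (hT.1.isAcyclic.anti hGT) hrv
  have hle := G.deleteEdges_le {s(r, v)}
  obtain ⟨W⟩ := ((hx.mono hle).symm.trans hrv.reachable).trans (hy.mono hle)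
  have he : s(r, v) ∈ W.bypass.edges := W.bypass.mem_edges_of_not_reachable_deleteEdges
    fun hxy => hb ((hx.trans hxy).trans hy.symm)
  have hsub := hT.2 x y _ (W.bypass_isPath.mapLe hGT)
  simp only [Walk.support_mapLe_eq_support] at hsub
  exact ⟨hsub r (W.bypass.fst_mem_support_of_mem_edges he) (Finset.mem_inter.2 ⟨hax, hay⟩),
    hsub v (W.bypass.snd_mem_support_of_mem_edges he) (Finset.mem_inter.2 ⟨hax, hay⟩)⟩

section Guards

variable [Fintype ι] {sch : ι → Finset A}

def HasGuard (sch : ι → Finset A) (p : Plan ι) : Prop :=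
  ∃ g ∈ p.rels, interface sch Finset.univ p ⊆ sch g

lemma hasGuard_of_forall {p : Plan ι} {g : ι} (hg : g ∈ p.rels)
    (h : ∀ a x y, x ∈ p.rels → y ∉ p.rels → a ∈ sch x → a ∈ sch y → a ∈ sch g) :
    HasGuard sch p := by
  refine ⟨g, hg, fun a ha => ?_⟩
  obtain ⟨⟨x, hx, hax⟩, y, hy, hay⟩ := mem_interface.1 ha
  exact h a x y hx (Finset.mem_sdiff.1 hy).2 hax hay

theorem exists_isJoinTreeOn_of_hasGuard : ∀ P : Plan ι, P.leaves.Nodup →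
    (∀ q ∈ P.subplans, HasGuard sch q) → ∃ G : SimpleGraph ι, IsJoinTreeOn G sch P.rels
  | .leaf i, _, _ => ⟨⊥, by simpa [Plan.rels] using IsJoinTreeOn.singleton sch i⟩
  | .node l r, hnd, hg => by
    obtain ⟨hndl, hndr, hlr⟩ := Plan.nodup_leaves_node.1 hnd
    simp only [Plan.subplans, List.mem_cons, List.mem_append, forall_eq_or_imp] at hg
    obtain ⟨Gl, hGl⟩ := exists_isJoinTreeOn_of_hasGuard l hndl fun q hq => hg.2 q (.inl hq)
    obtain ⟨Gr, hGr⟩ := exists_isJoinTreeOn_of_hasGuard r hndr fun q hq => hg.2 q (.inr hq)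
    obtain ⟨gl, hgl, hcovl⟩ := hg.2 l (.inl l.self_mem_subplans)
    obtain ⟨gr, hgr, hcovr⟩ := hg.2 r (.inr r.self_mem_subplans)
    refine ⟨_, Finset.coe_union l.rels r.rels ▸
      hGl.sup_edge hGr (Finset.disjoint_coe.2 hlr) hgl hgr fun a x y hx hy hax hay =>
        ⟨hcovl (mem_interface.2 ⟨⟨x, hx, hax⟩, y, ?_, hay⟩),
          hcovr (mem_interface.2 ⟨⟨y, hy, hay⟩, x, ?_, hax⟩)⟩⟩
    · exact Finset.mem_sdiff.2 ⟨Finset.mem_univ y, Finset.disjoint_right.1 hlr hy⟩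
    · exact Finset.mem_sdiff.2 ⟨Finset.mem_univ x, Finset.disjoint_left.1 hlr hx⟩

theorem JoinTree.exists_plan {T : SimpleGraph ι} (hT : JoinTree T sch) (G : SimpleGraph ι)
    (hGT : G ≤ T) (r : ι)
    (hguard : ∀ a x y, G.Reachable r x → ¬ G.Reachable r y → a ∈ sch x → a ∈ sch y → a ∈ sch r) :
    ∃ P : Plan ι, (∀ x, x ∈ P.rels ↔ G.Reachable r x) ∧ P.leaves.Nodup ∧
      ∀ q ∈ P.subplans, HasGuard sch q := by
  induction G using WellFoundedLT.induction generalizing r with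
  | _ G ih =>
  by_cases hleaf : ∀ v, ¬ G.Adj r v
  · refine ⟨.leaf r, fun x => by simp [Plan.rels, reachable_iff_eq_of_forall_not_adj hleaf],
      List.nodup_singleton r, ?_⟩
    simp only [Plan.subplans, List.mem_singleton, forall_eq]
    refine hasGuard_of_forall (Finset.mem_singleton_self r) fun a x y hx _ hax _ => ?_
    rwa [Finset.mem_singleton.1 hx] at hax
  push Not at hleaf
  obtain ⟨v, hrv⟩ := hleaf
  set G' := G.deleteEdges {s(r, v)}
  have hlt : G' < G := (G.deleteEdges_le _).lt_of_ne fun h => by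
    rw [← h] at hrv
    simp at hrv
  have hb : G.IsBridge s(r, v) :=
    isAcyclic_iff_forall_adj_isBridge.1 (hT.1.isAcyclic.anti hGT) hrv
  have hsplit : ∀ x, G.Reachable r x ↔ G'.Reachable r x ∨ G'.Reachable v x := fun x =>
    ⟨hb.reachable_deleteEdges_or,
      fun h => h.elim (·.mono hlt.le) fun h => hrv.reachable.trans (h.mono hlt.le)⟩
  have hcross := fun {a x y} => hT.mem_of_reachable_deleteEdges hGT hrv (a := a) (x := x) (y := y)
  obtain ⟨PL, hPL, hndL, hgL⟩ := ih G' hlt (hlt.le.trans hGT) r fun a x y hx hy hax hay => by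
    by_cases hvy : G'.Reachable v y
    · exact (hcross hx hvy hax hay).1
    · exact hguard a x y ((hsplit x).2 (.inl hx)) (by rw [hsplit]; tauto) hax hay
  obtain ⟨PR, hPR, hndR, hgR⟩ := ih G' hlt (hlt.le.trans hGT) v fun a x y hx hy hax hay => by
    by_cases hry : G'.Reachable r y
    · exact (hcross hry hx hay hax).2
    · have har := hguard a x y ((hsplit x).2 (.inr hx)) (by rw [hsplit]; tauto) hax hay
      exact (hcross (.refl r) hx har hax).2
  have hrels : ∀ x, x ∈ (Plan.node PL PR).rels ↔ G.Reachable r x := fun x => by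
    simp [Plan.rels, hPL, hPR, hsplit]
  refine ⟨.node PL PR, hrels, Plan.nodup_leaves_node.2 ⟨hndL, hndR,
    Finset.disjoint_left.2 fun x hxL hxR => hb (((hPL x).1 hxL).trans ((hPR x).1 hxR).symm)⟩, ?_⟩
  simp only [Plan.subplans, List.mem_cons, List.mem_append, forall_eq_or_imp]
  exact ⟨hasGuard_of_forall ((hrels r).2 (.refl r)) fun a x y hx hy =>
    hguard a x y ((hrels x).1 hx) (mt (hrels y).2 hy), fun q hq => hq.elim (hgL q) (hgR q)⟩

end Guards

/-- A conjunctive query admits a width-1 query plan if and only if it is acyclic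
(i.e., it admits a join tree). -/
theorem stmt_5 [Fintype ι] [Nonempty ι] (sch : ι → Finset A) :
    (∃ P : Plan ι, P.leaves.Nodup ∧ P.rels = Finset.univ ∧
        planWidth sch P.rels P ≤ 1) ↔
      ∃ G : SimpleGraph ι, JoinTree G sch := by
  have hwidth (P : Plan ι) : planWidth sch Finset.univ P ≤ 1 ↔ ∀ q ∈ P.subplans, HasGuard sch q :=
    by simp only [planWidth_le_iff, nodeWidth_le_one_iff, HasGuard]
  constructor
  · rintro ⟨P, hnd, hrels, hw⟩
    rw [hrels, hwidth] at hw
    obtain ⟨G, hG⟩ := exists_isJoinTreeOn_of_hasGuard P hnd hw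
    exact ⟨G, IsJoinTreeOn.joinTree (by simpa [hrels] using hG)⟩
  · rintro ⟨T, hT⟩
    have hconn := hT.1.connected.preconnected
    obtain ⟨P, hrels, hnd, hg⟩ := hT.exists_plan T le_rfl (Classical.arbitrary ι)
      fun a x y _ hy => absurd (hconn _ y) hy
    have hP : P.rels = Finset.univ := Finset.eq_univ_of_forall fun x => (hrels x).2 (hconn _ x)
    exact ⟨P, hnd, hP, by rwa [hP, hwidth]⟩
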